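/- In the twisted group algebra ℂ[Γ̄] with basis elements w(ρ_1,...,ρ_ν) as above, for 1 ≤ j ≤ ⌊ν/2⌋: e^{\overline{ε_{2j-1} − ε_{2j}}} · w(ρ_1,...,ρ_ν) = −i·ρ_{2j-1}ρ_{2j} · w(ρ_1,...,ρ_ν), and e^{\overline{ε_{2j} − ε_{2j+1}}} · w(ρ_1,...,ρ_ν) = −i·ρ_{2j}ρ_{2j+1} · w(ρ_1,...,ρ_{2j-1}, −ρ_{2j}, −ρ_{2j+1}, ρ_{2j+2},...,ρ_ν). In particular each w(ρ_1,...,ρ_ν) is an eigenvector of e^{\overline{ε_{2j-1} − ε_{2j}}} with eigenvalue −i ρ_{2j-1} ρ_{2j}. -/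

import Mathlib

/-!
Write `x_p = e^{ε̄_p}`. The cocycle makes the `x_p` square to `1` and pairwise anticommute, so
`g = x_a x_{a+1}` commutes with every factor `w_j(ρ_j)`, `j ∉ {a, a+1}`, and can be moved past the
factors before the pair. On the pair, `g (1 + αx_a)(1 + βx_{a+1}) = βx_a − αx_{a+1} + g − αβ`;
since `ρ_j² = 1`, for `a` even (`α = iρ_a`, `β = ρ_{a+1}`) this is `−iρ_aρ_{a+1}` times the pair
itself, while for `a` odd (`α = ρ_a`, `β = iρ_{a+1}`) it is `−iρ_aρ_{a+1}` times the pair with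
`ρ_a, ρ_{a+1}` negated.
-/

open Finset

/-- The bimultiplicative two-cocycle `ε` on `Γ = ℤ^ν`, with
`ε(ε_i, ε_j) = 1` if `i ≤ j` and `−1` if `i > j`. -/
noncomputable def eps (ν : ℕ) (α β : Fin ν → ℤ) : ℂ :=
  ∏ i, ∏ j, (if i ≤ j then (1 : ℂ) else -1) ^ (α i * β j)

/-- The image `ε̄_j` of the `j`-th standard basis vector in `Γ/2Γ = (ℤ/2)^ν`. -/
def uvec (ν : ℕ) (j : Fin ν) : Fin ν → ZMod 2 := fun i => if i = j then 1 else 0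

/-- `w_j(ρ)`: with 0-based indexing, `w_j(ρ) = 1 + iρ e^{ε̄_j}` for `j` in an odd
(1-based) position and `1 + ρ e^{ε̄_j}` for `j` in an even (1-based) position. -/
noncomputable def wfac (ν : ℕ) (A : Type) [Ring A] [Algebra ℂ A]
    (e : (Fin ν → ZMod 2) → A) (j : Fin ν) (r : ℂ) : A :=
  if (j : ℕ) % 2 = 0 then 1 + (Complex.I * r) • e (uvec ν j)
  else 1 + r • e (uvec ν j)

/-- `w(ρ_1,…,ρ_ν) = ∏_{j=1}^ν w_j(ρ_j)`, the product taken in increasing order. -/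
noncomputable def wprod (ν : ℕ) (A : Type) [Ring A] [Algebra ℂ A]
    (e : (Fin ν → ZMod 2) → A) (ρ : Fin ν → ℂ) : A :=
  (List.ofFn fun j => wfac ν A e j (ρ j)).prod

theorem mul_list_prod_eq_smul_list_prod {R M : Type*} [Monoid M] [SMul R M]
    [IsScalarTower R M M] [SMulCommClass R M M] {g x y x' y' : M} {c : R} {l₁ : List M}
    (l₂ : List M) (hcomm : ∀ z ∈ l₁, Commute g z) (hpair : g * (x * y) = c • (x' * y')) :
    g * (l₁ ++ x :: y :: l₂).prod = c • (l₁ ++ x' :: y' :: l₂).prod := by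
  simp only [List.prod_append, List.prod_cons, ← mul_assoc]
  rw [(Commute.list_prod_right l₁ g hcomm).eq, mul_assoc _ g, mul_assoc _ (g * x), mul_assoc g,
    hpair]
  simp only [smul_mul_assoc, mul_smul_comm, mul_assoc]

theorem List.ofFn_eq_take_append_cons_cons {M : Type*} {n : ℕ} (f : Fin n → M) (a : ℕ)
    (ha : a + 1 < n) :
    List.ofFn f = (List.ofFn f).take a ++
      f ⟨a, by omega⟩ :: f ⟨a + 1, ha⟩ :: (List.ofFn f).drop (a + 2) := by
  conv_lhs => rw [← List.take_append_drop a (List.ofFn f),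
    List.drop_eq_getElem_cons (by simp; omega), List.drop_eq_getElem_cons (by simp; omega)]
  simp

theorem mul_prod_ofFn_eq_smul_prod_ofFn {R M : Type*} [Monoid M] [SMul R M]
    [IsScalarTower R M M] [SMulCommClass R M M] {n : ℕ} {g : M} {c : R} (f f' : Fin n → M)
    (a : ℕ) (ha : a + 1 < n) (hcomm : ∀ i : Fin n, (i : ℕ) < a → Commute g (f i))
    (hout : ∀ i : Fin n, (i : ℕ) ≠ a → (i : ℕ) ≠ a + 1 → f' i = f i)
    (hpair : g * (f ⟨a, by omega⟩ * f ⟨a + 1, ha⟩) =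
      c • (f' ⟨a, by omega⟩ * f' ⟨a + 1, ha⟩)) :
    g * (List.ofFn f).prod = c • (List.ofFn f').prod := by
  have htake : (List.ofFn f').take a = (List.ofFn f).take a := by
    refine List.ext_getElem (by simp) fun i h₁ h₂ => ?_
    simp only [List.length_take, List.length_ofFn] at h₁
    simpa using hout ⟨i, by omega⟩ (by simp; omega) (by simp; omega)
  have hdrop : (List.ofFn f').drop (a + 2) = (List.ofFn f).drop (a + 2) := by
    refine List.ext_getElem (by simp) fun i h₁ h₂ => ?_
    simp only [List.length_drop, List.length_ofFn] at h₁
    simpa using hout ⟨a + 2 + i, by omega⟩ (by simp; omega) (by simp; omega)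
  rw [List.ofFn_eq_take_append_cons_cons f a ha, List.ofFn_eq_take_append_cons_cons f' a ha,
    htake, hdrop]
  refine mul_list_prod_eq_smul_list_prod _ (fun z hz => ?_) hpair
  obtain ⟨i, hi, rfl⟩ := List.getElem_of_mem hz
  simp only [List.length_take, List.length_ofFn] at hi
  simpa using hcomm ⟨i, by omega⟩ (by simp; omega)

theorem commute_mul_of_anticommute {R : Type*} [Ring R] {x y z : R}
    (hxz : x * z = -(z * x)) (hyz : y * z = -(z * y)) : Commute (x * y) z := by
  rw [Commute, SemiconjBy, mul_assoc, hyz, mul_neg, ← mul_assoc, hxz, neg_mul, neg_neg,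
    mul_assoc]

section CliffordPair

variable {A : Type*} [Ring A] {x y : A}

theorem mul_mul_one_add_smul_mul_one_add_smul {R : Type*} [CommRing R] [Algebra R A]
    (hx : x * x = 1) (hy : y * y = 1) (hyx : y * x = -(x * y)) (α β : R) :
    x * y * ((1 + α • x) * (1 + β • y)) = β • x - α • y + x * y - (α * β) • 1 := by
  have hxyx : x * y * x = -y := by rw [mul_assoc, hyx, mul_neg, ← mul_assoc, hx, one_mul]
  have hxyy : x * y * y = x := by rw [mul_assoc, hy, mul_one]
  have hxyxy : x * y * (x * y) = -1 := by rw [← mul_assoc, hxyx, neg_mul, hy]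
  simp only [mul_add, add_mul, mul_one, one_mul, mul_smul_comm, smul_mul_assoc,
    hxyx, hxyy, hxyxy]
  module

variable [Algebra ℂ A] {r r' : ℂ}

open Complex in
theorem mul_mul_one_add_I_smul_mul_one_add_smul (hx : x * x = 1) (hy : y * y = 1)
    (hyx : y * x = -(x * y)) (hr : r * r = 1) (hr' : r' * r' = 1) :
    x * y * ((1 + (I * r) • x) * (1 + r' • y))
      = (-I * r * r') • ((1 + (I * r) • x) * (1 + r' • y)) := by
  rw [mul_mul_one_add_smul_mul_one_add_smul hx hy hyx]
  simp only [mul_add, add_mul, mul_one, one_mul, mul_smul_comm, smul_mul_assoc]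
  match_scalars <;> grind [I_mul_I]

open Complex in
theorem mul_mul_one_add_smul_mul_one_add_I_smul (hx : x * x = 1) (hy : y * y = 1)
    (hyx : y * x = -(x * y)) (hr : r * r = 1) (hr' : r' * r' = 1) :
    x * y * ((1 + r • x) * (1 + (I * r') • y))
      = (-I * r * r') • ((1 + (-r) • x) * (1 + (I * -r') • y)) := by
  rw [mul_mul_one_add_smul_mul_one_add_smul hx hy hyx]
  simp only [mul_add, add_mul, mul_one, one_mul, mul_smul_comm, smul_mul_assoc]
  match_scalars <;> grind [I_mul_I]

end CliffordPair

section TwistedGroupAlgebra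

variable {ν : ℕ}

theorem eps_single_single (p q : Fin ν) :
    eps ν (Pi.single p 1) (Pi.single q 1) = if p ≤ q then 1 else -1 := by
  unfold eps
  rw [Finset.prod_eq_single p (fun i _ hi => by simp [hi]) (by simp),
    Finset.prod_eq_single q (fun j _ hj => by simp [hj]) (by simp)]
  simp

theorem cast_single_eq_uvec (p : Fin ν) :
    (fun i => ((Pi.single p 1 : Fin ν → ℤ) i : ZMod 2)) = uvec ν p := by
  funext i
  by_cases hi : i = p <;> simp [uvec, hi]

def IsEpsTwisted {A : Type*} [Ring A] [Algebra ℂ A] (e : (Fin ν → ZMod 2) → A) : Prop :=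
  ∀ α β : Fin ν → ℤ,
    e (fun i => (α i : ZMod 2)) * e (fun i => (β i : ZMod 2))
      = eps ν α β • e (fun i => ((α i + β i : ℤ) : ZMod 2))

variable {A : Type*} [Ring A] [Algebra ℂ A] {e : (Fin ν → ZMod 2) → A}

theorem IsEpsTwisted.e_uvec_mul_e_uvec (he : IsEpsTwisted e) (p q : Fin ν) :
    e (uvec ν p) * e (uvec ν q)
      = (if p ≤ q then (1 : ℂ) else -1) • e (uvec ν p + uvec ν q) := by
  have h := he (Pi.single p 1) (Pi.single q 1)
  simp only [Int.cast_add, eps_single_single] at h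
  rwa [← cast_single_eq_uvec p, ← cast_single_eq_uvec q]

theorem IsEpsTwisted.e_uvec_mul_self (he : IsEpsTwisted e) (hone : e 0 = 1) (p : Fin ν) :
    e (uvec ν p) * e (uvec ν p) = 1 := by
  rw [he.e_uvec_mul_e_uvec, if_pos le_rfl, one_smul,
    show uvec ν p + uvec ν p = 0 from funext fun _ => CharTwo.add_self_eq_zero _, hone]

theorem IsEpsTwisted.e_uvec_anticomm (he : IsEpsTwisted e) {p q : Fin ν} (hpq : p ≠ q) :
    e (uvec ν q) * e (uvec ν p) = -(e (uvec ν p) * e (uvec ν q)) := by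
  rw [he.e_uvec_mul_e_uvec, he.e_uvec_mul_e_uvec, add_comm (uvec ν q)]
  rcases hpq.lt_or_gt with h | h <;> simp [h.le, h.not_ge]

theorem IsEpsTwisted.e_uvec_mul_e_uvec_of_lt (he : IsEpsTwisted e) {p q : Fin ν} (hpq : p < q) :
    e (uvec ν p) * e (uvec ν q) = e (fun i => if i = p ∨ i = q then 1 else 0) := by
  rw [he.e_uvec_mul_e_uvec, if_pos hpq.le, one_smul]
  congr 1
  funext i
  by_cases hp : i = p <;> by_cases hq : i = q <;> simp_all [uvec, hpq.ne]

end TwistedGroupAlgebra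

section Wprod

variable {ν : ℕ} {A : Type} [Ring A] [Algebra ℂ A] {e : (Fin ν → ZMod 2) → A}

theorem wfac_of_even {j : Fin ν} (hj : (j : ℕ) % 2 = 0) (r : ℂ) :
    wfac ν A e j r = 1 + (Complex.I * r) • e (uvec ν j) :=
  if_pos hj

theorem wfac_of_odd {j : Fin ν} (hj : (j : ℕ) % 2 = 1) (r : ℂ) :
    wfac ν A e j r = 1 + r • e (uvec ν j) :=
  if_neg (by omega)

theorem IsEpsTwisted.commute_e_uvec_mul_wfac (he : IsEpsTwisted e) {p q j : Fin ν}
    (hjp : j ≠ p) (hjq : j ≠ q) (r : ℂ) :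
    Commute (e (uvec ν p) * e (uvec ν q)) (wfac ν A e j r) := by
  have hc : Commute (e (uvec ν p) * e (uvec ν q)) (e (uvec ν j)) :=
    commute_mul_of_anticommute (he.e_uvec_anticomm hjp) (he.e_uvec_anticomm hjq)
  unfold wfac
  split_ifs <;> exact (Commute.one_right _).add_right (hc.smul_right _)

theorem IsEpsTwisted.e_pair_mul_wprod (he : IsEpsTwisted e) (a : ℕ) (ha : a + 1 < ν)
    (ρ ρ' : Fin ν → ℂ) (c : ℂ) (hout : ∀ i : Fin ν, (i : ℕ) ≠ a → (i : ℕ) ≠ a + 1 → ρ' i = ρ i)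
    (hpair : e (uvec ν ⟨a, by omega⟩) * e (uvec ν ⟨a + 1, ha⟩)
        * (wfac ν A e ⟨a, by omega⟩ (ρ ⟨a, by omega⟩) * wfac ν A e ⟨a + 1, ha⟩ (ρ ⟨a + 1, ha⟩))
      = c • (wfac ν A e ⟨a, by omega⟩ (ρ' ⟨a, by omega⟩)
        * wfac ν A e ⟨a + 1, ha⟩ (ρ' ⟨a + 1, ha⟩))) :
    e (fun i => if i = (⟨a, by omega⟩ : Fin ν) ∨ i = ⟨a + 1, ha⟩ then 1 else 0) * wprod ν A e ρ
      = c • wprod ν A e ρ' := by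
  rw [← he.e_uvec_mul_e_uvec_of_lt (Fin.mk_lt_mk.2 (lt_add_one a))]
  refine mul_prod_ofFn_eq_smul_prod_ofFn _ _ a ha (fun i hi => ?_)
    (fun i hia hia' => by rw [hout i hia hia']) hpair
  exact he.commute_e_uvec_mul_wfac (Fin.ne_of_val_ne hi.ne)
    (Fin.ne_of_val_ne (show (i : ℕ) ≠ a + 1 by omega)) _

end Wprod

/-- The paper's 1-based pairs `(2j−1, 2j)` are the 0-based indices `(2k, 2k+1)` here. -/
theorem stmt14 (ν k : ℕ) (A : Type) [Ring A] [Algebra ℂ A]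
    (e : (Fin ν → ZMod 2) → A)
    (hone : e 0 = 1)
    (hmul : ∀ α β : Fin ν → ℤ,
      e (fun i => (α i : ZMod 2)) * e (fun i => (β i : ZMod 2))
        = eps ν α β • e (fun i => ((α i + β i : ℤ) : ZMod 2)))
    (ρ : Fin ν → ℂ) (hρ : ∀ j, ρ j = 1 ∨ ρ j = -1)
    (h1 : 2 * k + 1 < ν) :
    (e (fun i => if i = (⟨2 * k, by omega⟩ : Fin ν)
          ∨ i = (⟨2 * k + 1, by omega⟩ : Fin ν) then 1 else 0)
        * wprod ν A e ρ
      = (-Complex.I * ρ ⟨2 * k, by omega⟩ * ρ ⟨2 * k + 1, by omega⟩) •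
          wprod ν A e ρ) ∧
    (∀ h2 : 2 * k + 2 < ν,
      e (fun i => if i = (⟨2 * k + 1, by omega⟩ : Fin ν)
            ∨ i = (⟨2 * k + 2, by omega⟩ : Fin ν) then 1 else 0)
          * wprod ν A e ρ
        = (-Complex.I * ρ ⟨2 * k + 1, by omega⟩ * ρ ⟨2 * k + 2, by omega⟩) •
            wprod ν A e (fun i =>
              if i = (⟨2 * k + 1, by omega⟩ : Fin ν)
                ∨ i = (⟨2 * k + 2, by omega⟩ : Fin ν) then -ρ i else ρ i)) := by
  have he : IsEpsTwisted e := hmul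
  have hsq : ∀ j, ρ j * ρ j = 1 := fun j => by rcases hρ j with h | h <;> simp [h]
  refine ⟨he.e_pair_mul_wprod (2 * k) h1 ρ ρ _ (fun _ _ _ => rfl) ?_, fun h2 =>
    he.e_pair_mul_wprod (2 * k + 1) h2 ρ _ _ (fun i hi hi' => if_neg ?_) ?_⟩
  · rw [wfac_of_even (by simp), wfac_of_odd (by simp)]
    exact mul_mul_one_add_I_smul_mul_one_add_smul (he.e_uvec_mul_self hone _)
      (he.e_uvec_mul_self hone _) (he.e_uvec_anticomm (by simp)) (hsq _) (hsq _)
  · simp [Fin.ext_iff, hi, hi']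
  · rw [wfac_of_odd (by simp), wfac_of_even (by simp; omega), wfac_of_odd (by simp),
      wfac_of_even (by simp; omega)]
    simp only [true_or, or_true, if_true]
    exact mul_mul_one_add_smul_mul_one_add_I_smul (he.e_uvec_mul_self hone _)
      (he.e_uvec_mul_self hone _) (he.e_uvec_anticomm (by simp)) (hsq _) (hsq _)
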